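/- Let d > 1 and 1 ≤ p < 2d/(d+1), and set m := d(2/p − 1) (so that m > 1) and s := (m+p−2)/p. Then for all real numbers a > b > 0 one has (a^{m−1} − b^{m−1})/(a − b) ≥ ((m−1)/s^p) · ((a^s − b^s)/(a − b))^p. -/

import Mathlib

/-!
Both difference quotients are averages over `[b, a]`: `(a^s - b^s) / (s (a - b))` is the mean of
`x^(s-1)` and `(a^(m-1) - b^(m-1)) / ((m - 1)(a - b))` the mean of `x^(m-2)`. Since
`(s - 1) p = m - 2`, the inequality is Jensen's inequality for the convex function `t ↦ t^p`.
-/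

open MeasureTheory Set
open scoped Interval

theorem intervalAverage_rpow_le {f : ℝ → ℝ} {a b p : ℝ} (hp : 1 ≤ p) (hab : a ≠ b)
    (hf₀ : ∀ x ∈ Ι a b, 0 ≤ f x) (hf : IntervalIntegrable f volume a b)
    (hfp : IntervalIntegrable (fun x => f x ^ p) volume a b) :
    (⨍ x in a..b, f x) ^ p ≤ ⨍ x in a..b, f x ^ p := by
  have hcont : ContinuousOn (fun x : ℝ => x ^ p) (Ici 0) := fun x _ =>
    (Real.continuousAt_rpow_const x p (Or.inr (by linarith))).continuousWithinAt
  refine (convexOn_rpow hp).map_set_average_le hcont isClosed_Ici ?_ (by simp) ?_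
    hf.def' hfp.def'
  · simpa [Real.volume_uIoc, sub_eq_zero] using hab.symm
  · exact (ae_restrict_mem measurableSet_uIoc).mono hf₀

theorem intervalAverage_rpow {a b r : ℝ} (hr : r ≠ -1) (ha : 0 < a) (hb : 0 < b)
    (hab : a ≠ b) :
    ⨍ x in a..b, x ^ r = (b ^ (r + 1) - a ^ (r + 1)) / ((r + 1) * (b - a)) := by
  have h0 : (0 : ℝ) ∉ [[a, b]] := fun h => by
    rcases mem_uIcc.1 h with h | h <;> linarith [h.1]
  rw [interval_average_eq, integral_rpow (Or.inr ⟨hr, h0⟩), smul_eq_mul]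
  have : b - a ≠ 0 := sub_ne_zero.mpr hab.symm
  have : r + 1 ≠ 0 := fun h => hr (by linarith)
  field_simp

theorem rpow_slope_pow_le {p s m a b : ℝ} (hp : 1 ≤ p) (hs : 0 < s) (hm : 1 < m)
    (hsm : (s - 1) * p = m - 2) (hb : 0 < b) (hab : b < a) :
    (m - 1) / s ^ p * ((a ^ s - b ^ s) / (a - b)) ^ p ≤
      (a ^ (m - 1) - b ^ (m - 1)) / (a - b) := by
  have ha : 0 < a := hb.trans hab
  have hpos : ∀ x ∈ [[b, a]], 0 < x := fun x hx => hb.trans_le (uIcc_of_le hab.le ▸ hx).1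
  have hcont : ContinuousOn (fun x : ℝ => (x ^ (s - 1)) ^ p) [[b, a]] :=
    (continuousOn_id.rpow_const fun x hx => Or.inl (hpos x hx).ne').rpow_const
      fun _ _ => Or.inr (by linarith)
  have jensen := intervalAverage_rpow_le (f := fun x => x ^ (s - 1)) hp hab.ne
    (fun x hx => Real.rpow_nonneg (hpos x (uIoc_subset_uIcc hx)).le _)
    (intervalIntegral.intervalIntegrable_rpow (Or.inr fun h => (hpos 0 h).false))
    hcont.intervalIntegrable
  have hpow : ⨍ x in b..a, (x ^ (s - 1)) ^ p = ⨍ x in b..a, x ^ (m - 2) :=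
    setAverage_congr_fun measurableSet_uIoc <| ae_of_all _ fun x hx => by
      rw [← Real.rpow_mul (hpos x (uIoc_subset_uIcc hx)).le, hsm]
  have hs_avg : ⨍ x in b..a, x ^ (s - 1) = (a ^ s - b ^ s) / (s * (a - b)) := by
    have := intervalAverage_rpow (r := s - 1) (by linarith) hb ha hab.ne
    rwa [sub_add_cancel] at this
  have hm_avg :
      ⨍ x in b..a, x ^ (m - 2) = (a ^ (m - 1) - b ^ (m - 1)) / ((m - 1) * (a - b)) := by
    have := intervalAverage_rpow (r := m - 2) (by linarith) hb ha hab.ne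
    rwa [show m - 2 + 1 = m - 1 by ring] at this
  have hslope : 0 ≤ (a ^ s - b ^ s) / (a - b) :=
    div_nonneg (sub_nonneg.2 (Real.rpow_le_rpow hb.le hab.le hs.le)) (sub_pos.2 hab).le
  rw [hpow, hs_avg, hm_avg, mul_comm s, ← div_div, Real.div_rpow hslope hs.le] at jensen
  calc (m - 1) / s ^ p * ((a ^ s - b ^ s) / (a - b)) ^ p
      = (m - 1) * (((a ^ s - b ^ s) / (a - b)) ^ p / s ^ p) := by ring
    _ ≤ (m - 1) * ((a ^ (m - 1) - b ^ (m - 1)) / ((m - 1) * (a - b))) := by gcongr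
    _ = (a ^ (m - 1) - b ^ (m - 1)) / (a - b) := by field_simp [(by linarith : m - 1 ≠ 0)]

theorem stmt1 (d p m s : ℝ) (hd : 1 < d) (hp1 : 1 ≤ p) (hp2 : p < 2 * d / (d + 1))
    (hm : m = d * (2 / p - 1)) (hs : s = (m + p - 2) / p) :
    ∀ a b : ℝ, 0 < b → b < a →
      (a ^ (m - 1) - b ^ (m - 1)) / (a - b) ≥
        (m - 1) / s ^ p * ((a ^ s - b ^ s) / (a - b)) ^ p := by
  have hp0 : 0 < p := by linarith
  have hpd : p * (d + 1) < 2 * d := (lt_div_iff₀ (by linarith)).mp hp2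
  have hmp : m * p = d * (2 - p) := by rw [hm]; field_simp
  have hm1 : 1 < m := by nlinarith
  have hsp : s * p = m + p - 2 := by rw [hs]; field_simp
  have hs0 : 0 < s := by rw [hs]; exact div_pos (by linarith) hp0
  exact fun a b hb hab => rpow_slope_pow_le hp1 hs0 hm1 (by linear_combination hsp) hb hab
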